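/- arXiv:2307.12141 — 2 statements merged into one kernel-verified Lean document; each statement's English description precedes it below -/
import Mathlib

section
/- For P(x) = x_1² + ⋯ + x_p² − x_{p+1}² − ⋯ − x_n² on ℝ^n and complex s, t, at points where P(x) > 0 and P(y) > 0: P(∂_x − ∂_y)(P(x)^{s+1} P(y)^{t+1}) = c_{s,t}(x,y) · P(x)^s P(y)^t, where c_{s,t}(x,y) = 2(t+1)(2t+n)P(x) − 8(s+1)(t+1)P(x,y) + 2(s+1)(2s+n)P(y), with P(x,y) the polarization of P. -/
/-!
Write `F(x, y) = u(x) v(y)` with `u = P^{s+1}`, `v = P^{t+1}`, let `D_j = ∂_{x_j} − ∂_{y_j}`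
and let `ε_j = ±1` (`pqSign p j`) be the signs of `P`. Since `D_j` acts as `∂_j` on `u` and
as `−∂_j` on `v`, Leibniz' rule gives `P(D) F = (P(∂) u) v − 2 ∑_j ε_j ∂_j u ∂_j v + u P(∂) v`.
Now `∂_j P^{a+1} = 2 (a+1) ε_j x_j P^a`, so the middle sum is `4 (s+1)(t+1) P(x,y) P(x)^s P(y)^t`,
and differentiating once more (using `ε_j² = 1`) yields the Bernstein–Sato type identity
`P(∂) P^{a+1} = 2 (a+1)(2a+n) P^a`, which accounts for the two outer terms.
-/

set_option autoImplicit false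

open Complex Finset

/-- The quadratic form `P(x) = x_1² + ⋯ + x_p² − x_{p+1}² − ⋯ − x_n²` on `ℝⁿ`, `n = p+q`. -/
def Ppq (p q : ℕ) (x : Fin (p + q) → ℝ) : ℝ :=
  ∑ j : Fin (p + q), (if (j : ℕ) < p then (1 : ℝ) else -1) * x j ^ 2

/-- The polarization `P(x,y) = ∑_{j≤p} x_j y_j − ∑_{j>p} x_j y_j`. -/
def PpqBil (p q : ℕ) (x y : Fin (p + q) → ℝ) : ℝ :=
  ∑ j : Fin (p + q), (if (j : ℕ) < p then (1 : ℝ) else -1) * x j * y j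

/-- Partial derivative `∂_{x_j}` (first factor) of a function on `ℝⁿ × ℝⁿ`. -/
noncomputable def pdX {n : ℕ} (j : Fin n) (f : (Fin n → ℝ) × (Fin n → ℝ) → ℂ) :
    (Fin n → ℝ) × (Fin n → ℝ) → ℂ :=
  fun z => fderiv ℝ f z (Pi.single j 1, 0)

/-- Partial derivative `∂_{y_j}` (second factor) of a function on `ℝⁿ × ℝⁿ`. -/
noncomputable def pdY {n : ℕ} (j : Fin n) (f : (Fin n → ℝ) × (Fin n → ℝ) → ℂ) :
    (Fin n → ℝ) × (Fin n → ℝ) → ℂ :=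
  fun z => fderiv ℝ f z (0, Pi.single j 1)

/-- The directional derivative `∂_{x_j} − ∂_{y_j}`. -/
noncomputable def pdD {n : ℕ} (j : Fin n) (f : (Fin n → ℝ) × (Fin n → ℝ) → ℂ) :
    (Fin n → ℝ) × (Fin n → ℝ) → ℂ :=
  fun z => fderiv ℝ f z (Pi.single j 1, -Pi.single j 1)

/-- The operator `P(∂_x − ∂_y) = ∑_{j≤p} (∂_{x_j} − ∂_{y_j})² − ∑_{j>p} (∂_{x_j} − ∂_{y_j})²`. -/
noncomputable def PDiffOp (p q : ℕ) (f : (Fin (p + q) → ℝ) × (Fin (p + q) → ℝ) → ℂ) :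
    (Fin (p + q) → ℝ) × (Fin (p + q) → ℝ) → ℂ :=
  fun z => ∑ j : Fin (p + q), (if (j : ℕ) < p then (1 : ℂ) else -1) * pdD j (pdD j f) z

open Filter Topology

theorem cpow_sub_one_mul_self {w : ℂ} (hw : w ≠ 0) (a : ℂ) : w ^ (a - 1) * w = w ^ a := by
  rw [cpow_sub _ _ hw, cpow_one, div_mul_cancel₀ _ hw]

theorem HasFDerivAt.ofReal_cpow_const {E : Type*} [NormedAddCommGroup E] [NormedSpace ℝ E]
    {f : E → ℝ} {f' : E →L[ℝ] ℝ} {x : E} (hf : HasFDerivAt f f' x) (hx : 0 < f x) (a : ℂ) :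
    HasFDerivAt (fun y => (f y : ℂ) ^ a) ((a * (f x : ℂ) ^ (a - 1)) • ofRealCLM.comp f') x := by
  have hcpow := (hasStrictDerivAt_cpow_const (c := a) (ofReal_mem_slitPlane.2 hx)).hasDerivAt
  refine ((hcpow.hasFDerivAt.restrictScalars ℝ).comp x
    (ofRealCLM.hasFDerivAt.comp x hf)).congr_fderiv ?_
  ext v
  simp [mul_comm]

section PartialDeriv

variable {n : ℕ}

noncomputable def partialDeriv (j : Fin n) (g : (Fin n → ℝ) → ℂ) (x : Fin n → ℝ) : ℂ :=
  fderiv ℝ g x (Pi.single j 1)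

variable (j : Fin n) {f g : (Fin n → ℝ) × (Fin n → ℝ) → ℂ} {z : (Fin n → ℝ) × (Fin n → ℝ)}

theorem Filter.EventuallyEq.pdD_eq (h : f =ᶠ[𝓝 z] g) : pdD j f z = pdD j g z := by
  simp only [pdD, h.fderiv_eq]

theorem pdD_sub (hf : DifferentiableAt ℝ f z) (hg : DifferentiableAt ℝ g z) :
    pdD j (fun w => f w - g w) z = pdD j f z - pdD j g z := by
  simp [pdD, fderiv_fun_sub hf hg]

theorem pdD_mul (hf : DifferentiableAt ℝ f z) (hg : DifferentiableAt ℝ g z) :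
    pdD j (fun w => f w * g w) z = pdD j f z * g z + f z * pdD j g z := by
  simp only [pdD, fderiv_fun_mul hf hg, _root_.add_apply, _root_.smul_apply, smul_eq_mul]
  ring

theorem pdD_comp_fst {u : (Fin n → ℝ) → ℂ} (hu : DifferentiableAt ℝ u z.1) :
    pdD j (fun w => u w.1) z = partialDeriv j u z.1 := by
  have h : HasFDerivAt (fun w => u w.1) ((fderiv ℝ u z.1).comp (.fst ℝ _ _)) z :=
    hu.hasFDerivAt.comp z hasFDerivAt_fst
  simp [pdD, partialDeriv, h.fderiv]

theorem pdD_comp_snd {v : (Fin n → ℝ) → ℂ} (hv : DifferentiableAt ℝ v z.2) :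
    pdD j (fun w => v w.2) z = -partialDeriv j v z.2 := by
  have h : HasFDerivAt (fun w => v w.2) ((fderiv ℝ v z.2).comp (.snd ℝ _ _)) z :=
    hv.hasFDerivAt.comp z hasFDerivAt_snd
  simp [pdD, partialDeriv, h.fderiv]

theorem DifferentiableAt.mul_fst_snd {u v : (Fin n → ℝ) → ℂ} (hu : DifferentiableAt ℝ u z.1)
    (hv : DifferentiableAt ℝ v z.2) : DifferentiableAt ℝ (fun w => u w.1 * v w.2) z :=
  (hu.comp z differentiableAt_fst).mul (hv.comp z differentiableAt_snd)

theorem pdD_mul_fst_snd {u v : (Fin n → ℝ) → ℂ} (hu : DifferentiableAt ℝ u z.1)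
    (hv : DifferentiableAt ℝ v z.2) :
    pdD j (fun w => u w.1 * v w.2) z
      = partialDeriv j u z.1 * v z.2 - u z.1 * partialDeriv j v z.2 := by
  rw [pdD_mul (f := fun w => u w.1) (g := fun w => v w.2) j (hu.comp z differentiableAt_fst)
    (hv.comp z differentiableAt_snd),
    pdD_comp_fst j hu, pdD_comp_snd j hv]
  ring

theorem pdD_pdD_mul_fst_snd {u v : (Fin n → ℝ) → ℂ}
    (hu : ∀ᶠ x in 𝓝 z.1, DifferentiableAt ℝ u x) (hv : ∀ᶠ y in 𝓝 z.2, DifferentiableAt ℝ v y)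
    (hu' : DifferentiableAt ℝ (partialDeriv j u) z.1)
    (hv' : DifferentiableAt ℝ (partialDeriv j v) z.2) :
    pdD j (pdD j (fun w => u w.1 * v w.2)) z
      = partialDeriv j (partialDeriv j u) z.1 * v z.2
        - 2 * (partialDeriv j u z.1 * partialDeriv j v z.2)
        + u z.1 * partialDeriv j (partialDeriv j v) z.2 := by
  have hfirst : pdD j (fun w => u w.1 * v w.2) =ᶠ[𝓝 z]
      fun w => partialDeriv j u w.1 * v w.2 - u w.1 * partialDeriv j v w.2 := by
    filter_upwards [continuousAt_fst.eventually hu, continuousAt_snd.eventually hv]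
      with w hu hv using pdD_mul_fst_snd j hu hv
  rw [hfirst.pdD_eq j, pdD_sub j (hu'.mul_fst_snd hv.self_of_nhds)
      (hu.self_of_nhds.mul_fst_snd hv'),
    pdD_mul_fst_snd j hu' hv.self_of_nhds, pdD_mul_fst_snd j hu.self_of_nhds hv']
  ring

end PartialDeriv

section Ppq

variable {p q : ℕ}

def pqSign (p : ℕ) {n : ℕ} (j : Fin n) : ℝ := if (j : ℕ) < p then 1 else -1

theorem pqSign_mul_self {n : ℕ} (j : Fin n) : pqSign p j * pqSign p j = 1 := by
  unfold pqSign; split_ifs <;> norm_num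

theorem ofReal_pqSign {n : ℕ} (j : Fin n) :
    (pqSign p j : ℂ) = if (j : ℕ) < p then 1 else -1 := by
  unfold pqSign; split_ifs <;> simp

theorem ofReal_Ppq (x : Fin (p + q) → ℝ) :
    (Ppq p q x : ℂ) = ∑ j, (pqSign p j : ℂ) * (x j : ℂ) ^ 2 := by
  simp [Ppq, pqSign, apply_ite ((↑) : ℝ → ℂ)]

theorem ofReal_PpqBil (x y : Fin (p + q) → ℝ) :
    (PpqBil p q x y : ℂ) = ∑ j, (pqSign p j : ℂ) * ((x j : ℂ) * y j) := by
  simp [PpqBil, pqSign, apply_ite ((↑) : ℝ → ℂ)]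

noncomputable def fderivPpq (x : Fin (p + q) → ℝ) : (Fin (p + q) → ℝ) →L[ℝ] ℝ :=
  ∑ j, (2 * pqSign p j * x j) • ContinuousLinearMap.proj (R := ℝ) (φ := fun _ => ℝ) j

theorem fderivPpq_single (x : Fin (p + q) → ℝ) (j : Fin (p + q)) :
    fderivPpq x (Pi.single j 1) = 2 * pqSign p j * x j := by
  simp [fderivPpq, Pi.single_apply]

theorem hasFDerivAt_Ppq (x : Fin (p + q) → ℝ) : HasFDerivAt (Ppq p q) (fderivPpq x) x := by
  have hterm (j : Fin (p + q)) : HasFDerivAt (fun y : Fin (p + q) → ℝ => pqSign p j * y j ^ 2)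
      ((2 * pqSign p j * x j) • ContinuousLinearMap.proj (R := ℝ) (φ := fun _ => ℝ) j) x := by
    refine (((hasFDerivAt_apply j x).pow 2).const_mul (pqSign p j)).congr_fderiv ?_
    ext v; simp; ring
  exact HasFDerivAt.fun_sum fun j _ => hterm j

theorem eventually_differentiableAt_cpow_Ppq {x : Fin (p + q) → ℝ} (hx : 0 < Ppq p q x)
    (a : ℂ) : ∀ᶠ y in 𝓝 x, DifferentiableAt ℝ (fun y => (Ppq p q y : ℂ) ^ a) y := by
  filter_upwards [(hasFDerivAt_Ppq x).continuousAt.eventually (lt_mem_nhds hx)] with y hy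
  exact ((hasFDerivAt_Ppq y).ofReal_cpow_const hy a).differentiableAt

theorem partialDeriv_cpow_Ppq {x : Fin (p + q) → ℝ} (hx : 0 < Ppq p q x) (a : ℂ)
    (j : Fin (p + q)) :
    partialDeriv j (fun y => (Ppq p q y : ℂ) ^ a) x
      = 2 * a * pqSign p j * x j * (Ppq p q x : ℂ) ^ (a - 1) := by
  simp [partialDeriv, ((hasFDerivAt_Ppq x).ofReal_cpow_const hx a).fderiv, fderivPpq_single]
  ring

theorem eventually_partialDeriv_cpow_Ppq {x : Fin (p + q) → ℝ} (hx : 0 < Ppq p q x) (a : ℂ)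
    (j : Fin (p + q)) :
    partialDeriv j (fun y => (Ppq p q y : ℂ) ^ (a + 1)) =ᶠ[𝓝 x]
      fun y => 2 * (a + 1) * pqSign p j * ((y j : ℂ) * (Ppq p q y : ℂ) ^ a) := by
  filter_upwards [(hasFDerivAt_Ppq x).continuousAt.eventually (lt_mem_nhds hx)] with y hy
  rw [partialDeriv_cpow_Ppq hy, add_sub_cancel_right]
  ring

theorem hasFDerivAt_coord_mul_cpow_Ppq {x : Fin (p + q) → ℝ} (hx : 0 < Ppq p q x) (a : ℂ)
    (j : Fin (p + q)) :
    HasFDerivAt (fun y => (y j : ℂ) * (Ppq p q y : ℂ) ^ a)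
      ((x j : ℂ) • (a * (Ppq p q x : ℂ) ^ (a - 1)) • ofRealCLM.comp (fderivPpq x)
        + (Ppq p q x : ℂ) ^ a • ofRealCLM.comp (ContinuousLinearMap.proj j)) x :=
  (ofRealCLM.hasFDerivAt.comp x (hasFDerivAt_apply j x)).mul
    ((hasFDerivAt_Ppq x).ofReal_cpow_const hx a)

theorem differentiableAt_partialDeriv_cpow_Ppq {x : Fin (p + q) → ℝ} (hx : 0 < Ppq p q x)
    (a : ℂ) (j : Fin (p + q)) :
    DifferentiableAt ℝ (partialDeriv j (fun y => (Ppq p q y : ℂ) ^ (a + 1))) x :=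
  ((hasFDerivAt_coord_mul_cpow_Ppq hx a j).differentiableAt.const_mul _).congr_of_eventuallyEq
    (eventually_partialDeriv_cpow_Ppq hx a j)

theorem partialDeriv_partialDeriv_cpow_Ppq {x : Fin (p + q) → ℝ} (hx : 0 < Ppq p q x)
    (a : ℂ) (j : Fin (p + q)) :
    partialDeriv j (partialDeriv j (fun y => (Ppq p q y : ℂ) ^ (a + 1))) x
      = 2 * (a + 1) * pqSign p j * (Ppq p q x : ℂ) ^ a
        + 4 * (a + 1) * a * (x j : ℂ) ^ 2 * (Ppq p q x : ℂ) ^ (a - 1) := by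
  have hε : (pqSign p j : ℂ) * pqSign p j = 1 := by exact_mod_cast pqSign_mul_self j
  rw [partialDeriv, (eventually_partialDeriv_cpow_Ppq hx a j).fderiv_eq,
    fderiv_const_mul (hasFDerivAt_coord_mul_cpow_Ppq hx a j).differentiableAt,
    (hasFDerivAt_coord_mul_cpow_Ppq hx a j).fderiv]
  simp [fderivPpq_single]
  linear_combination (4 * (a + 1) * a * (x j : ℂ) ^ 2 * (Ppq p q x : ℂ) ^ (a - 1)) * hε

theorem sum_pqSign_mul_partialDeriv_partialDeriv_cpow_Ppq {x : Fin (p + q) → ℝ}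
    (hx : 0 < Ppq p q x) (a : ℂ) :
    ∑ j, (pqSign p j : ℂ) * partialDeriv j (partialDeriv j (fun y => (Ppq p q y : ℂ) ^ (a + 1))) x
      = 2 * (a + 1) * (2 * a + (p + q : ℂ)) * (Ppq p q x : ℂ) ^ a := by
  calc _ = ∑ j : Fin (p + q), (2 * (a + 1) * (Ppq p q x : ℂ) ^ a
          + 4 * (a + 1) * a * (Ppq p q x : ℂ) ^ (a - 1) * ((pqSign p j : ℂ) * (x j : ℂ) ^ 2)) := by
        refine sum_congr rfl fun j _ => ?_
        have hε : (pqSign p j : ℂ) * pqSign p j = 1 := by exact_mod_cast pqSign_mul_self j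
        rw [partialDeriv_partialDeriv_cpow_Ppq hx]
        linear_combination (2 * (a + 1) * (Ppq p q x : ℂ) ^ a) * hε
    _ = _ := by
        rw [sum_add_distrib, sum_const, ← mul_sum, ← ofReal_Ppq, card_univ, Fintype.card_fin,
          mul_assoc _ ((Ppq p q x : ℂ) ^ (a - 1)),
          cpow_sub_one_mul_self (ofReal_ne_zero.2 hx.ne')]
        ring

theorem sum_pqSign_mul_partialDeriv_cpow_Ppq_mul {x y : Fin (p + q) → ℝ} (hx : 0 < Ppq p q x)
    (hy : 0 < Ppq p q y) (a b : ℂ) :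
    ∑ j, (pqSign p j : ℂ) * (partialDeriv j (fun x => (Ppq p q x : ℂ) ^ (a + 1)) x
        * partialDeriv j (fun y => (Ppq p q y : ℂ) ^ (b + 1)) y)
      = 4 * (a + 1) * (b + 1) * PpqBil p q x y * (Ppq p q x : ℂ) ^ a * (Ppq p q y : ℂ) ^ b := by
  simp only [partialDeriv_cpow_Ppq hx, partialDeriv_cpow_Ppq hy, add_sub_cancel_right,
    ofReal_PpqBil, mul_sum, sum_mul]
  refine sum_congr rfl fun j _ => ?_
  have hε : (pqSign p j : ℂ) * pqSign p j = 1 := by exact_mod_cast pqSign_mul_self j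
  linear_combination (4 * (a + 1) * (b + 1) * pqSign p j * (x j : ℂ) * y j
    * (Ppq p q x : ℂ) ^ a * (Ppq p q y : ℂ) ^ b) * hε

end Ppq

/-- for `P(x) = x_1² + ⋯ + x_p² − x_{p+1}² − ⋯ − x_n²` and complex `s, t`,
at points where `P(x) > 0` and `P(y) > 0`:
`P(∂_x − ∂_y)(P(x)^{s+1} P(y)^{t+1}) = c_{s,t}(x,y) P(x)^s P(y)^t`, where
`c_{s,t}(x,y) = 2(t+1)(2t+n)P(x) − 8(s+1)(t+1)P(x,y) + 2(s+1)(2s+n)P(y)`. -/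
theorem stmt_12 (p q : ℕ) (s t : ℂ)
    (z : (Fin (p + q) → ℝ) × (Fin (p + q) → ℝ))
    (hx : 0 < Ppq p q z.1) (hy : 0 < Ppq p q z.2) :
    PDiffOp p q (fun w => (Ppq p q w.1 : ℂ) ^ (s + 1) * (Ppq p q w.2 : ℂ) ^ (t + 1)) z
      = (2 * (t + 1) * (2 * t + (p + q : ℂ)) * (Ppq p q z.1 : ℂ)
          - 8 * (s + 1) * (t + 1) * (PpqBil p q z.1 z.2 : ℂ)
          + 2 * (s + 1) * (2 * s + (p + q : ℂ)) * (Ppq p q z.2 : ℂ))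
        * (Ppq p q z.1 : ℂ) ^ s * (Ppq p q z.2 : ℂ) ^ t := by
  set u : (Fin (p + q) → ℝ) → ℂ := fun x => (Ppq p q x : ℂ) ^ (s + 1)
  set v : (Fin (p + q) → ℝ) → ℂ := fun y => (Ppq p q y : ℂ) ^ (t + 1)
  have hleibniz (j : Fin (p + q)) := pdD_pdD_mul_fst_snd (u := u) (v := v) j
    (eventually_differentiableAt_cpow_Ppq hx (s + 1))
    (eventually_differentiableAt_cpow_Ppq hy (t + 1))
    (differentiableAt_partialDeriv_cpow_Ppq hx s j)
    (differentiableAt_partialDeriv_cpow_Ppq hy t j)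
  calc PDiffOp p q (fun w => u w.1 * v w.2) z
      = (∑ j, (pqSign p j : ℂ) * partialDeriv j (partialDeriv j u) z.1) * v z.2
        - 2 * ∑ j, (pqSign p j : ℂ) * (partialDeriv j u z.1 * partialDeriv j v z.2)
        + u z.1 * ∑ j, (pqSign p j : ℂ) * partialDeriv j (partialDeriv j v) z.2 := by
        simp only [PDiffOp, ← ofReal_pqSign, hleibniz, sum_mul, mul_sum, ← sum_sub_distrib,
          ← sum_add_distrib]
        exact sum_congr rfl fun j _ => by ring
    _ = _ := by
        rw [sum_pqSign_mul_partialDeriv_partialDeriv_cpow_Ppq hx,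
          sum_pqSign_mul_partialDeriv_cpow_Ppq_mul hx hy,
          sum_pqSign_mul_partialDeriv_partialDeriv_cpow_Ppq hy]
        simp only [u, v, cpow_add _ _ (ofReal_ne_zero.2 hx.ne'),
          cpow_add _ _ (ofReal_ne_zero.2 hy.ne'), cpow_one]
        ring
end

section
/- Let V be a Euclidean Jordan algebra of rank r with Jordan determinant det, and let (p_{k,i})_{0≤k≤r, 1≤i≤d_k} be an orthonormal basis (for the Fischer inner product) of the span W of all translates of det, chosen compatibly with the homogeneous decomposition W = ⊕_k W_k, and set p̆_{k,i} = ∂(p_{k,i}) det. Then for all x, y ∈ V: det(x − y) = Σ_{k=0}^r (−1)^{r−k} Σ_{i=1}^{d_k} p_{k,i}(x) · p̆_{k,i}(y). -/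
set_option autoImplicit false

open MvPolynomial Classical

/-- A Euclidean (formally real) Jordan algebra structure on `ℝⁿ`, with coordinates chosen
orthonormal for the trace form, together with its rank, Jordan determinant (the top
coefficient of the generic minimal polynomial, recorded here as data with its basic
properties), Jordan trace, Jordan inverse, and Peirce constant `d`. -/
structure EuclideanJordanData (n : ℕ) where
  /-- the Jordan product -/
  jmul : (Fin n → ℝ) → (Fin n → ℝ) → (Fin n → ℝ)
  jmul_add_left : ∀ x y z, jmul (x + y) z = jmul x z + jmul y z
  jmul_smul_left : ∀ (a : ℝ) x z, jmul (a • x) z = a • jmul x z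
  jmul_comm : ∀ x y, jmul x y = jmul y x
  jordan_id : ∀ x y, jmul (jmul x y) (jmul x x) = jmul x (jmul y (jmul x x))
  /-- the unit element -/
  jone : Fin n → ℝ
  jone_jmul : ∀ x, jmul jone x = x
  /-- the rank -/
  rank : ℕ
  /-- the Jordan determinant -/
  jdet : MvPolynomial (Fin n) ℝ
  jdet_homog : jdet.IsHomogeneous rank
  jdet_one : eval jone jdet = 1
  /-- the Jordan trace -/
  jtrace : (Fin n → ℝ) →ₗ[ℝ] ℝ
  /-- Euclidean: the trace form `τ(x,y) = tr(x∘y)` is the standard inner product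
  (coordinates are orthonormal for it) -/
  trace_form_eq : ∀ x y, jtrace (jmul x y) = ∑ i, x i * y i
  /-- the Jordan inverse -/
  jinv : (Fin n → ℝ) → (Fin n → ℝ)
  jinv_spec : ∀ x, eval x jdet ≠ 0 → jmul x (jinv x) = jone
  jinv_inv : ∀ x, eval x jdet ≠ 0 → jinv (jinv x) = x
  /-- the Peirce constant `d` (common dimension of the off-diagonal Peirce spaces) -/
  peirce : ℕ
  dim_eq : 2 * n = 2 * rank + peirce * rank * (rank - 1)

/-- The translate `p_a(x) = p(x + a)` of a polynomial. -/
noncomputable def polyTranslate {n : ℕ} (p : MvPolynomial (Fin n) ℝ) (a : Fin n → ℝ) :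
    MvPolynomial (Fin n) ℝ :=
  aeval (fun i => X i + C (a i)) p

/-- The linear span of all translates of `p`. -/
noncomputable def translateSpan {n : ℕ} (p : MvPolynomial (Fin n) ℝ) :
    Submodule ℝ (MvPolynomial (Fin n) ℝ) :=
  Submodule.span ℝ (Set.range (polyTranslate p))

/-- The monomial differential operator `∂^d` on polynomials on `ℝⁿ`. -/
noncomputable def monOp {n : ℕ} (d : Fin n →₀ ℕ) (q : MvPolynomial (Fin n) ℝ) :
    MvPolynomial (Fin n) ℝ :=
  (Finset.univ : Finset (Fin n)).toList.foldr (fun i r => (⇑(pderiv i))^[d i] r) q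

/-- The constant-coefficient differential operator `∂(p)` on polynomials. -/
noncomputable def diffOp {n : ℕ} (p q : MvPolynomial (Fin n) ℝ) : MvPolynomial (Fin n) ℝ :=
  (AddMonoidAlgebra.coeff p).sum fun d c => c • monOp d q

/-- The Fischer inner product `(p,q)_F = (∂(p)q)(0)` (with respect to the positive
definite trace form, for which the coordinates are orthonormal). -/
noncomputable def fischer {n : ℕ} (p q : MvPolynomial (Fin n) ℝ) : ℝ :=
  constantCoeff (diffOp p q)


/-! The translate `q_y(x) = det(x - y)` lies in `W`, so Fischer-orthonormality of the `p_{k,i}`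
gives `q_y = ∑ (p_{k,i}, q_y)_F p_{k,i}`. Constant-coefficient operators commute with
translations, so `(p_{k,i}, q_y)_F = (∂(p_{k,i}) det)(-y)`, and since `∂(p_{k,i}) det` is
homogeneous of degree `r - k` this is `(-1)^(r-k) p̆_{k,i}(y)`. -/

namespace MvPolynomial

variable {σ R : Type*} [CommSemiring R]

lemma IsHomogeneous.eval_smul {φ : MvPolynomial σ R} {m : ℕ} (h : φ.IsHomogeneous m)
    (c : R) (x : σ → R) : eval (c • x) φ = c ^ m * eval x φ := by
  rw [eval_eq, eval_eq, Finset.mul_sum]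
  refine Finset.sum_congr rfl fun d hd => ?_
  have hdeg : ∑ i ∈ d.support, d i = m := by
    rw [← Finsupp.degree_apply, Finsupp.degree_eq_weight_one]
    exact h (mem_support_iff.mp hd)
  simp only [Pi.smul_apply, smul_eq_mul, mul_pow, Finset.prod_mul_distrib,
    Finset.prod_pow_eq_pow_sum, hdeg]
  ring

protected lemma IsHomogeneous.iterate_pderiv {φ : MvPolynomial σ R} {m : ℕ}
    (h : φ.IsHomogeneous m) (i : σ) (t : ℕ) :
    ((⇑(pderiv i))^[t] φ).IsHomogeneous (m - t) := by
  induction t with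
  | zero => simpa using h
  | succ t ih => simpa [Function.iterate_succ_apply', Nat.sub_sub] using ih.pderiv

lemma pderiv_aeval_X_add_C (a : σ → R) (i : σ) (p : MvPolynomial σ R) :
    pderiv i (aeval (fun j => X j + C (a j)) p) = aeval (fun j => X j + C (a j)) (pderiv i p) := by
  induction p using MvPolynomial.induction_on with
  | C c => simp only [aeval_C, algebraMap_eq, pderiv_C, map_zero]
  | add p q hp hq => simp only [map_add, hp, hq]
  | mul_X p j hp =>
    simp only [map_mul, aeval_X, pderiv_mul, map_add, pderiv_C, add_zero, hp, pderiv_X,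
      Pi.single_apply]
    split_ifs <;> simp

end MvPolynomial

variable {n : ℕ}

lemma eval_polyTranslate (p : MvPolynomial (Fin n) ℝ) (a x : Fin n → ℝ) :
    eval x (polyTranslate p a) = eval (x + a) p := by
  induction p using MvPolynomial.induction_on with
  | C c => simp [polyTranslate]
  | add p q hp hq => simp_all [polyTranslate]
  | mul_X p j hp => simp_all [polyTranslate]

lemma constantCoeff_polyTranslate (p : MvPolynomial (Fin n) ℝ) (a : Fin n → ℝ) :
    constantCoeff (polyTranslate p a) = eval a p := by
  simpa using eval_polyTranslate p a 0

/-! `polyTranslate`, `monOp` and `diffOp` bundled as linear endomorphisms, so that the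
commutation of `diffOp` with translations follows from that of each `pderiv i`. -/

noncomputable def translateEnd (a : Fin n → ℝ) : Module.End ℝ (MvPolynomial (Fin n) ℝ) :=
  (aeval fun i => X i + C (a i)).toLinearMap

lemma translateEnd_apply (a : Fin n → ℝ) (p : MvPolynomial (Fin n) ℝ) :
    translateEnd a p = polyTranslate p a := rfl

noncomputable def monOpEnd (d : Fin n →₀ ℕ) : Module.End ℝ (MvPolynomial (Fin n) ℝ) :=
  (Finset.univ : Finset (Fin n)).toList.foldr (fun i L => (pderiv i).toLinearMap ^ d i * L) 1

lemma monOpEnd_apply (d : Fin n →₀ ℕ) (q : MvPolynomial (Fin n) ℝ) :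
    monOpEnd d q = monOp d q := by
  unfold monOpEnd monOp
  induction (Finset.univ : Finset (Fin n)).toList with
  | nil => rfl
  | cons i l ih => simp [Module.End.mul_apply, Module.End.coe_pow, ih]

noncomputable def diffOpEnd (p : MvPolynomial (Fin n) ℝ) : Module.End ℝ (MvPolynomial (Fin n) ℝ) :=
  (AddMonoidAlgebra.coeff p).sum fun d c => c • monOpEnd d

lemma diffOpEnd_apply (p q : MvPolynomial (Fin n) ℝ) : diffOpEnd p q = diffOp p q := by
  simp [diffOpEnd, diffOp, LinearMap.finsupp_sum_apply, monOpEnd_apply]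

lemma commute_translateEnd_monOpEnd (a : Fin n → ℝ) (d : Fin n →₀ ℕ) :
    Commute (translateEnd a) (monOpEnd d) := by
  have hpderiv (i : Fin n) : Commute (translateEnd a) (pderiv i).toLinearMap :=
    LinearMap.ext fun p => (pderiv_aeval_X_add_C a i p).symm
  unfold monOpEnd
  induction (Finset.univ : Finset (Fin n)).toList with
  | nil => exact Commute.one_right _
  | cons i l ih => exact ((hpderiv i).pow_right _).mul_right ih

lemma diffOp_polyTranslate (p q : MvPolynomial (Fin n) ℝ) (a : Fin n → ℝ) :
    diffOp p (polyTranslate q a) = polyTranslate (diffOp p q) a := by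
  have : Commute (translateEnd a) (diffOpEnd p) :=
    Commute.sum_right _ _ _ fun d _ => (commute_translateEnd_monOpEnd a d).smul_right _
  simpa [translateEnd_apply, diffOpEnd_apply] using (LinearMap.congr_fun this q).symm

lemma fischer_polyTranslate (p q : MvPolynomial (Fin n) ℝ) (a : Fin n → ℝ) :
    fischer p (polyTranslate q a) = eval a (diffOp p q) := by
  rw [fischer, diffOp_polyTranslate, constantCoeff_polyTranslate]

noncomputable def fischerₗ (p : MvPolynomial (Fin n) ℝ) : MvPolynomial (Fin n) ℝ →ₗ[ℝ] ℝ :=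
  lcoeff ℝ 0 ∘ₗ diffOpEnd p

lemma fischerₗ_apply (p q : MvPolynomial (Fin n) ℝ) : fischerₗ p q = fischer p q := by
  simp [fischerₗ, fischer, diffOpEnd_apply, constantCoeff_eq]

lemma sum_fischer_smul_eq_of_orthonormal {ι : Type*} [Fintype ι] [DecidableEq ι]
    (p : ι → MvPolynomial (Fin n) ℝ)
    (hortho : ∀ j j', fischer (p j) (p j') = if j = j' then 1 else 0)
    {q : MvPolynomial (Fin n) ℝ} (hq : q ∈ Submodule.span ℝ (Set.range p)) :
    ∑ j, fischer (p j) q • p j = q := by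
  obtain ⟨c, rfl⟩ := (Submodule.mem_span_range_iff_exists_fun ℝ).mp hq
  have hcoeff (j : ι) : fischer (p j) (∑ j', c j' • p j') = c j := by
    rw [← fischerₗ_apply, map_sum]
    simp [fischerₗ_apply, hortho]
  simp only [hcoeff]

lemma isHomogeneous_monOp {q : MvPolynomial (Fin n) ℝ} {r : ℕ} (hq : q.IsHomogeneous r)
    (d : Fin n →₀ ℕ) : (monOp d q).IsHomogeneous (r - d.degree) := by
  suffices ∀ l : List (Fin n),
      (l.foldr (fun i r => (⇑(pderiv i))^[d i] r) q).IsHomogeneous (r - (l.map d).sum) by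
    simpa [monOp, Finset.sum_map_toList, Finsupp.degree_eq_sum] using this Finset.univ.toList
  intro l
  induction l with
  | nil => simpa using hq
  | cons i l ih => simpa [Nat.sub_sub, add_comm] using ih.iterate_pderiv i (d i)

lemma isHomogeneous_diffOp {p q : MvPolynomial (Fin n) ℝ} {k r : ℕ}
    (hp : p.IsHomogeneous k) (hq : q.IsHomogeneous r) : (diffOp p q).IsHomogeneous (r - k) := by
  refine IsHomogeneous.sum _ _ _ fun d hd => ?_
  dsimp only
  have hdeg : d.degree = k := by
    rw [Finsupp.degree_eq_weight_one]
    exact hp (mem_support_iff.mp hd)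
  rw [← hdeg, smul_eq_C_mul]
  exact (isHomogeneous_monOp hq d).C_mul _

theorem stmt_13_general {n : ℕ} (J : EuclideanJordanData n)
    (dk : Fin (J.rank + 1) → ℕ)
    (pfam : ∀ k : Fin (J.rank + 1), Fin (dk k) → MvPolynomial (Fin n) ℝ)
    (hhom : ∀ k i, (pfam k i).IsHomogeneous (k : ℕ))
    (hspan : translateSpan J.jdet
      ≤ Submodule.span ℝ (Set.range fun j : Σ k : Fin (J.rank + 1), Fin (dk k) =>
          pfam j.1 j.2))
    (hortho : ∀ (j j' : Σ k : Fin (J.rank + 1), Fin (dk k)),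
      fischer (pfam j.1 j.2) (pfam j'.1 j'.2) = if j = j' then 1 else 0)
    (x y : Fin n → ℝ) :
    eval (x - y) J.jdet
      = ∑ j : Σ k : Fin (J.rank + 1), Fin (dk k),
          (-1 : ℝ) ^ (J.rank - (j.1 : ℕ)) * eval x (pfam j.1 j.2)
            * eval y (diffOp (pfam j.1 j.2) J.jdet) := by
  set q := polyTranslate J.jdet (-y)
  have hq : q ∈ translateSpan J.jdet := Submodule.subset_span ⟨-y, rfl⟩
  calc eval (x - y) J.jdet = eval x q := by rw [eval_polyTranslate, sub_eq_add_neg]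
    _ = eval x (∑ j : Σ k : Fin (J.rank + 1), Fin (dk k),
          fischer (pfam j.1 j.2) q • pfam j.1 j.2) := by
      rw [sum_fischer_smul_eq_of_orthonormal _ hortho (hspan hq)]
    _ = _ := by
      simp only [map_sum, smul_eval, q, fischer_polyTranslate]
      refine Finset.sum_congr rfl fun j _ => ?_
      rw [← neg_one_smul ℝ y, (isHomogeneous_diffOp (hhom j.1 j.2) J.jdet_homog).eval_smul]
      ring

/-- generalized Taylor expansion of `det(x−y)` for a Euclidean Jordan
algebra of rank `r`. If `(p_{k,i})` is an orthonormal basis (for the Fischer inner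
product) of the span `W` of all translates of `det`, compatible with the homogeneous
decomposition `W = ⊕_k W_k` (so `p_{k,i} ∈ W` is homogeneous of degree `k`), and
`p̆_{k,i} = ∂(p_{k,i}) det`, then
`det(x − y) = ∑_{k=0}^r (−1)^{r−k} ∑_{i=1}^{d_k} p_{k,i}(x) · p̆_{k,i}(y)`. -/
theorem stmt_13 {n : ℕ} (J : EuclideanJordanData n)
    (dk : Fin (J.rank + 1) → ℕ)
    (pfam : ∀ k : Fin (J.rank + 1), Fin (dk k) → MvPolynomial (Fin n) ℝ)
    (hmem : ∀ k i, pfam k i ∈ translateSpan J.jdet)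
    (hhom : ∀ k i, (pfam k i).IsHomogeneous (k : ℕ))
    (hspan : translateSpan J.jdet
      ≤ Submodule.span ℝ (Set.range fun j : Σ k : Fin (J.rank + 1), Fin (dk k) =>
          pfam j.1 j.2))
    (hortho : ∀ (j j' : Σ k : Fin (J.rank + 1), Fin (dk k)),
      fischer (pfam j.1 j.2) (pfam j'.1 j'.2) = if j = j' then 1 else 0)
    (x y : Fin n → ℝ) :
    eval (x - y) J.jdet
      = ∑ j : Σ k : Fin (J.rank + 1), Fin (dk k),
          (-1 : ℝ) ^ (J.rank - (j.1 : ℕ)) * eval x (pfam j.1 j.2)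
            * eval y (diffOp (pfam j.1 j.2) J.jdet) :=
  stmt_13_general J dk pfam hhom hspan hortho x y
end
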